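/- arXiv:2208.01761 — 5 statements merged into one kernel-verified Lean document; each statement's English description precedes it below -/
import Mathlib

section
/- Consider the extended system matrices 𝒜 = [[A, B_d],[0, I_q]] and 𝒞 = [C, 0]. If the pair (A, C) is detectable and the transfer matrix G_d(z) = C (zI − A)^{-1} B_d has no transmission zero at z = 1 (i.e., the matrix [[A − I, B_d],[C, 0]] has full column rank), then the pair (𝒜, 𝒞) is detectable. -/
/-!
Write `H(μ) = [[μ - 𝒜], [𝒞]]` for the Hautus matrix of the extended pair and split a kernel
vector as `(x, d)`. The disturbance rows give `(μ - 1) d = 0`. For `μ ≠ 1` this forces `d = 0`,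
and then `(x, 0) ∈ ker H(μ)` says exactly that `x` is in the kernel of the Hautus matrix of
`(A, C)`, which is trivial: by detectability when `μ` is an eigenvalue of `A` with `|μ| ≥ 1`,
and because `μ - A` is invertible otherwise. For `μ = 1` the remaining rows of `H(1)(x, d) = 0`
read `(A - 1) x + B_d d = 0` and `C x = 0`, so `(x, d) = 0` by the no-zero-at-one condition.
-/

open Matrix

namespace Matrix

variable {K : Type*} [Field K] {l m r o : Type*} [Fintype m] [Fintype r]

theorem rank_eq_card_width_iff (M : Matrix l m K) :
    M.rank = Fintype.card m ↔ ∀ v, M *ᵥ v = 0 → v = 0 := by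
  rw [← ker_mulVecLin_eq_bot_iff, LinearMap.ker_eq_bot, coe_mulVecLin, mulVec_injective_iff,
    linearIndependent_iff_card_eq_finrank_span, rank_eq_finrank_span_cols, eq_comm]
  rfl

theorem eq_zero_of_map_ofReal_mulVec_eq_zero {M : Matrix l m ℝ}
    (hM : ∀ v, M *ᵥ v = 0 → v = 0) {v : m → ℂ} (hv : M.map (Complex.ofReal ·) *ᵥ v = 0) :
    v = 0 := by
  have hre : M *ᵥ (fun j => (v j).re) = 0 := funext fun i => by
    simpa [mulVec, dotProduct, Complex.re_sum] using congrArg Complex.re (congrFun hv i)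
  have him : M *ᵥ (fun j => (v j).im) = 0 := funext fun i => by
    simpa [mulVec, dotProduct, Complex.im_sum] using congrArg Complex.im (congrFun hv i)
  funext j
  exact Complex.ext (congrFun (hM _ hre) j) (congrFun (hM _ him) j)

variable [DecidableEq m]

def hautusMatrix (A : Matrix m m K) (C : Matrix o m K) (μ : K) : Matrix (m ⊕ o) m K :=
  fromRows (μ • 1 - A) C

theorem eq_zero_of_hautusMatrix_mulVec_eq_zero {A : Matrix m m K} {C : Matrix o m K} {μ : K}
    (hrank : μ ∈ spectrum K A → (hautusMatrix A C μ).rank = Fintype.card m) {x : m → K}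
    (hx : hautusMatrix A C μ *ᵥ x = 0) : x = 0 := by
  by_cases hμ : μ ∈ spectrum K A
  · exact (rank_eq_card_width_iff _).mp (hrank hμ) x hx
  · rw [spectrum.notMem_iff, Algebra.algebraMap_eq_smul_one, ← mulVec_injective_iff_isUnit] at hμ
    refine hμ ((funext fun i => ?_).trans (mulVec_zero _).symm)
    simpa [hautusMatrix, fromRows_mulVec] using congrFun hx (Sum.inl i)

variable [DecidableEq r] (A : Matrix m m K) (B : Matrix m r K) (C : Matrix o m K)

theorem hautusMatrix_fromBlocks_mulVec (μ : K) (x : m → K) (d : r → K) :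
    hautusMatrix (fromBlocks A B 0 1) (fromCols C 0) μ *ᵥ Sum.elim x d =
      Sum.elim (Sum.elim (μ • x - (A *ᵥ x + B *ᵥ d)) ((μ - 1) • d)) (C *ᵥ x) := by
  ext ((i | i) | i) <;>
    simp [hautusMatrix, fromRows_mulVec, sub_mulVec, smul_mulVec, fromBlocks_mulVec,
      fromCols_mulVec, sub_smul]

theorem eq_zero_of_hautusMatrix_fromBlocks_mulVec_eq_zero {μ : K} (hμ : μ ≠ 1)
    (hAC : ∀ x, hautusMatrix A C μ *ᵥ x = 0 → x = 0) (v : m ⊕ r → K)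
    (hv : hautusMatrix (fromBlocks A B 0 1) (fromCols C 0) μ *ᵥ v = 0) : v = 0 := by
  obtain ⟨x, d, rfl⟩ : ∃ x d, v = Sum.elim x d := ⟨_, _, (Sum.elim_comp_inl_inr v).symm⟩
  simp only [hautusMatrix_fromBlocks_mulVec, ← Sum.elim_zero_zero, Sum.elim_eq_iff] at hv
  obtain ⟨⟨hx, hd⟩, hCx⟩ := hv
  obtain rfl : d = 0 := (smul_eq_zero.mp hd).resolve_left (sub_ne_zero.mpr hμ)
  obtain rfl : x = 0 := hAC x <| by
    rw [mulVec_zero, add_zero] at hx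
    rw [hautusMatrix, fromRows_mulVec, sub_mulVec, smul_mulVec, one_mulVec, hx, hCx,
      Sum.elim_zero_zero]
  exact Sum.elim_zero_zero

theorem eq_zero_of_hautusMatrix_fromBlocks_one_mulVec_eq_zero
    (hABC : ∀ v, fromBlocks (A - 1) B C 0 *ᵥ v = 0 → v = 0) (v : m ⊕ r → K)
    (hv : hautusMatrix (fromBlocks A B 0 1) (fromCols C 0) 1 *ᵥ v = 0) : v = 0 := by
  obtain ⟨x, d, rfl⟩ : ∃ x d, v = Sum.elim x d := ⟨_, _, (Sum.elim_comp_inl_inr v).symm⟩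
  simp only [hautusMatrix_fromBlocks_mulVec, ← Sum.elim_zero_zero, Sum.elim_eq_iff,
    one_smul] at hv
  obtain ⟨⟨hx, -⟩, hCx⟩ := hv
  have htop : (A - 1) *ᵥ x + B *ᵥ d = 0 := by
    rw [sub_mulVec, one_mulVec, ← neg_eq_zero, ← hx]
    abel
  refine hABC _ ?_
  simp [fromBlocks_mulVec, htop, hCx]

end Matrix

theorem extended_pair_detectable_general
    {n q p : ℕ} (A : Matrix (Fin n) (Fin n) ℝ)
    (Bd : Matrix (Fin n) (Fin q) ℝ) (C : Matrix (Fin p) (Fin n) ℝ)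
    (hdet : ∀ μ ∈ spectrum ℂ (A.map (Complex.ofReal ·)), 1 ≤ ‖μ‖ →
      (Matrix.fromRows (μ • (1 : Matrix (Fin n) (Fin n) ℂ) - A.map (Complex.ofReal ·))
        (C.map (Complex.ofReal ·))).rank = n)
    (hzero : (Matrix.fromBlocks (A - 1) Bd C (0 : Matrix (Fin p) (Fin q) ℝ)).rank = n + q) :
    ∀ μ ∈ spectrum ℂ ((Matrix.fromBlocks A Bd 0 (1 : Matrix (Fin q) (Fin q) ℝ)).map
        (Complex.ofReal ·)), 1 ≤ ‖μ‖ →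
      (Matrix.fromRows
        (μ • (1 : Matrix (Fin n ⊕ Fin q) (Fin n ⊕ Fin q) ℂ) -
          (Matrix.fromBlocks A Bd 0 (1 : Matrix (Fin q) (Fin q) ℝ)).map (Complex.ofReal ·))
        ((Matrix.fromCols C (0 : Matrix (Fin p) (Fin q) ℝ)).map (Complex.ofReal ·))).rank
        = n + q := by
  intro μ _ hμ
  have hcard : n + q = Fintype.card (Fin n ⊕ Fin q) := by simp
  rw [hcard] at hzero ⊢
  simp only [fromBlocks_map, fromCols_map, Matrix.map_zero _ Complex.ofReal_zero,
    Matrix.map_one _ Complex.ofReal_zero Complex.ofReal_one]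
  rw [rank_eq_card_width_iff]
  by_cases hμ1 : μ = 1
  · subst hμ1
    refine eq_zero_of_hautusMatrix_fromBlocks_one_mulVec_eq_zero _ _ _ fun v hv => ?_
    refine eq_zero_of_map_ofReal_mulVec_eq_zero ((rank_eq_card_width_iff _).mp hzero) ?_
    simpa [fromBlocks_map, Matrix.map_sub] using hv
  · refine eq_zero_of_hautusMatrix_fromBlocks_mulVec_eq_zero _ _ _ hμ1 fun x => ?_
    exact eq_zero_of_hautusMatrix_mulVec_eq_zero fun hspec =>
      (hdet μ hspec hμ).trans (Fintype.card_fin n).symm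

/-- If `(A, C)` is detectable and the plant has no transmission zero at `z = 1` on the
`d → y` channel, then the extended pair `(𝒜, 𝒞)` (state augmented with a constant
disturbance) is detectable. -/
theorem extended_pair_detectable
    {n q p : ℕ} (A : Matrix (Fin n) (Fin n) ℝ)
    (Bd : Matrix (Fin n) (Fin q) ℝ) (C : Matrix (Fin p) (Fin n) ℝ)
    (hq : q ≤ p)
    (hdet : ∀ μ ∈ spectrum ℂ (A.map (Complex.ofReal ·)), 1 ≤ ‖μ‖ →
      (Matrix.fromRows (μ • (1 : Matrix (Fin n) (Fin n) ℂ) - A.map (Complex.ofReal ·))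
        (C.map (Complex.ofReal ·))).rank = n)
    (hzero : (Matrix.fromBlocks (A - 1) Bd C (0 : Matrix (Fin p) (Fin q) ℝ)).rank = n + q) :
    ∀ μ ∈ spectrum ℂ ((Matrix.fromBlocks A Bd 0 (1 : Matrix (Fin q) (Fin q) ℝ)).map
        (Complex.ofReal ·)), 1 ≤ ‖μ‖ →
      (Matrix.fromRows
        (μ • (1 : Matrix (Fin n ⊕ Fin q) (Fin n ⊕ Fin q) ℂ) -
          (Matrix.fromBlocks A Bd 0 (1 : Matrix (Fin q) (Fin q) ℝ)).map (Complex.ofReal ·))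
        ((Matrix.fromCols C (0 : Matrix (Fin p) (Fin q) ℝ)).map (Complex.ofReal ·))).rank
        = n + q :=
  extended_pair_detectable_general A Bd C hdet hzero
end

section
/- Low-gain disturbance estimator stability: let A be Schur stable, G_d(1) = C(I−A)^{-1}B_d have full column rank, and L = G_d(1)^†. Then there exists ε* > 0 such that for all ε ∈ (0, ε*), the matrix 𝒜 − ℒ𝒞 is Schur stable, where 𝒜 = [[A, B_d],[0, I_q]], 𝒞 = [C, 0], and ℒ = [[0],[εL]]. -/
/-!
Suppose `μ` is an eigenvalue of the closed-loop matrix with `1 ≤ ‖μ‖`. Then `μ` is not an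
eigenvalue of `A`, and the Schur complement of the block `μ - A` shows that `μ` is an eigenvalue
of `1 - ε T(μ)`, where `T(z) = L C (z - A)⁻¹ B_d`. Since `T(1) = L G_d(1) = 1`, the resolvent
identity gives `‖T(μ) - 1‖ ≤ K ‖1 - μ‖`, with `K` uniform because the resolvent of `A` is bounded
on the compact annulus `1 ≤ ‖z‖ ≤ r` which contains every such `μ`. Hence `μ` lies within
`ε K ‖1 - μ‖` of `1 - ε`, so `‖μ‖ ≤ 1 - ε + O(ε²) < 1` for small `ε`, a contradiction.
-/

open Matrix Filter Topology

namespace spectrum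

theorem resolvent_sub_resolvent_eq_smul {R A : Type*} [CommRing R] [Ring A] [Algebra R A]
    {a : A} {r s : R} (hr : r ∈ resolventSet R a) (hs : s ∈ resolventSet R a) :
    resolvent a r - resolvent a s = (s - r) • (resolvent a r * resolvent a s) := by
  rw [resolvent, resolvent, Ring.inverse_sub_inverse (iff_of_true hr hs),
    sub_sub_sub_cancel_right, ← map_sub, ← Algebra.commutes, Algebra.smul_def, mul_assoc]

variable {𝕜 A : Type*} [NontriviallyNormedField 𝕜] [NormedRing A] [NormedAlgebra 𝕜 A]
  [CompleteSpace A]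

theorem exists_norm_resolvent_le_of_isCompact {a : A} {s : Set 𝕜} (hs : IsCompact s)
    (hsa : s ⊆ resolventSet 𝕜 a) : ∃ C, ∀ z ∈ s, ‖resolvent a z‖ ≤ C :=
  hs.exists_bound_of_continuousOn fun _ hz ↦
    (hasDerivAt_resolvent_const_left (hsa hz)).continuousAt.continuousWithinAt

theorem norm_sub_le_of_mem {a : A} {μ : 𝕜} (hμ : μ ∈ spectrum 𝕜 a) (c : 𝕜) :
    ‖μ - c‖ ≤ ‖a - algebraMap 𝕜 A c‖ * ‖(1 : A)‖ := by
  refine norm_le_norm_mul_of_mem ?_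
  rw [← sub_singleton_eq]
  exact Set.sub_mem_sub hμ rfl

end spectrum

namespace Matrix

theorem isUnit_of_rank_eq_card {n K : Type*} [Fintype n] [DecidableEq n] [Field K]
    {M : Matrix n n K} (h : M.rank = Fintype.card n) : IsUnit M := by
  have hrange : LinearMap.range M.mulVecLin = ⊤ :=
    Submodule.eq_top_of_finrank_eq (h.trans (Module.finrank_fintype_fun_eq_card K).symm)
  exact mulVec_surjective_iff_isUnit.mp (LinearMap.range_eq_top.mp hrange)

theorem inv_transpose_mul_self_mul_transpose_mul_self {m n K : Type*} [Fintype m] [Fintype n]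
    [DecidableEq n] [Field K] [LinearOrder K] [IsStrictOrderedRing K] {G : Matrix m n K}
    (h : G.rank = Fintype.card n) : (Gᵀ * G)⁻¹ * Gᵀ * G = 1 := by
  have hGtG : IsUnit (Gᵀ * G) := isUnit_of_rank_eq_card (by rwa [rank_transpose_mul_self])
  rw [Matrix.mul_assoc, nonsing_inv_mul _ ((isUnit_iff_isUnit_det _).mp hGtG)]

theorem isUnit_of_isUnit_map {n K L : Type*} [Fintype n] [DecidableEq n] [Field K]
    [CommRing L] [Nontrivial L] (f : K →+* L) {M : Matrix n n K} (h : IsUnit (M.map f)) :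
    IsUnit M := by
  rw [isUnit_iff_isUnit_det] at h ⊢
  rw [← RingHom.mapMatrix_apply, ← RingHom.map_det] at h
  exact isUnit_iff_ne_zero.mpr fun h0 ↦ by simp [h0] at h

theorem resolvent_map_one {n α β : Type*} [Fintype n] [DecidableEq n] [CommRing α]
    [CommRing β] (f : α →+* β) {A : Matrix n n α} (h : IsUnit (1 - A)) :
    resolvent (A.map f) (1 : β) = (1 - A)⁻¹.map f := by
  rw [resolvent, map_one, ← nonsing_inv_eq_ringInverse]
  refine inv_eq_right_inv ?_
  rw [← Matrix.map_one f f.map_zero f.map_one, ← Matrix.map_sub _ f.map_sub, ← Matrix.map_mul,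
    mul_nonsing_inv _ ((isUnit_iff_isUnit_det _).mp h)]

theorem mem_spectrum_schur_complement {m k K : Type*} [Fintype m] [DecidableEq m]
    [Fintype k] [DecidableEq k] [Field K] {A : Matrix m m K} {B : Matrix m k K}
    {C : Matrix k m K} {D : Matrix k k K} {μ : K} (hμ : μ ∈ spectrum K (fromBlocks A B C D))
    (hA : μ ∈ resolventSet K A) : μ ∈ spectrum K (D + C * resolvent A μ * B) := by
  let := hA.invertible
  have hblock : algebraMap K _ μ - fromBlocks A B C D =
      fromBlocks (algebraMap K _ μ - A) (-B) (-C) (algebraMap K _ μ - D) := by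
    simp only [Algebra.algebraMap_eq_smul_one, ← fromBlocks_one, fromBlocks_smul, smul_zero,
      sub_eq_add_neg, fromBlocks_neg, fromBlocks_add, zero_add]
  rw [spectrum.mem_iff, isUnit_iff_isUnit_det, isUnit_iff_ne_zero, not_not, hblock,
    det_fromBlocks₁₁, mul_eq_zero] at hμ
  rw [spectrum.mem_iff, isUnit_iff_isUnit_det, isUnit_iff_ne_zero, not_not, resolvent,
    Ring.inverse_invertible]
  convert hμ.resolve_left (isUnit_det_of_invertible _).ne_zero using 2
  simp only [Matrix.neg_mul, Matrix.mul_neg, neg_neg, sub_add_eq_sub_sub]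

theorem fromBlocks_sub_fromRows_zero_mul_fromCols_zero {l m n R : Type*} [Fintype m]
    [Fintype n] [DecidableEq m] [Ring R] (A : Matrix l l R) (B : Matrix l m R)
    (L : Matrix m n R) (C : Matrix n l R) :
    fromBlocks A B 0 1 - fromRows (0 : Matrix l n R) L * fromCols C (0 : Matrix n m R) =
      fromBlocks A B (-(L * C)) 1 := by
  rw [fromRows_mul_fromCols, sub_eq_add_neg, fromBlocks_neg, fromBlocks_add]
  simp

def IsSchurStable {n 𝕜 : Type*} [Fintype n] [DecidableEq n] [RCLike 𝕜]
    (M : Matrix n n 𝕜) : Prop :=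
  ∀ μ ∈ spectrum 𝕜 M, ‖μ‖ < 1

theorem IsSchurStable.mem_resolventSet {n 𝕜 : Type*} [Fintype n] [DecidableEq n] [RCLike 𝕜]
    {M : Matrix n n 𝕜} (hM : M.IsSchurStable) {z : 𝕜} (hz : 1 ≤ ‖z‖) :
    z ∈ resolventSet 𝕜 M :=
  Classical.not_not.mp fun hzM ↦ (hM z hzM).not_ge hz

end Matrix

theorem RCLike.norm_lt_one_of_norm_sub_le {𝕜 : Type*} [RCLike 𝕜] {μ : 𝕜} {ε K : ℝ}
    (hε : 0 < ε) (hε1 : ε < 1) (hεK : 2 * K * ε < 1)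
    (h : ‖μ - (1 - ε : ℝ)‖ ≤ ε * K * ‖1 - μ‖) : ‖μ‖ < 1 := by
  set δ := ‖μ - (1 - ε : ℝ)‖
  have h1 : ‖1 - μ‖ ≤ δ + ε := by
    calc ‖1 - μ‖ = ‖-(μ - (1 - ε : ℝ)) + (ε : 𝕜)‖ := by congr 1; push_cast; ring
      _ ≤ ‖-(μ - (1 - ε : ℝ))‖ + ‖(ε : 𝕜)‖ := norm_add_le _ _
      _ = δ + ε := by rw [norm_neg, RCLike.norm_ofReal, abs_of_pos hε]
  have h2 : ‖μ‖ ≤ δ + (1 - ε) := by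
    calc ‖μ‖ = ‖(μ - (1 - ε : ℝ)) + ((1 - ε : ℝ) : 𝕜)‖ := by rw [sub_add_cancel]
      _ ≤ δ + ‖((1 - ε : ℝ) : 𝕜)‖ := norm_add_le _ _
      _ = δ + (1 - ε) := by rw [RCLike.norm_ofReal, abs_of_pos (by linarith)]
  have hKt : K * ‖1 - μ‖ < 1 := by
    rcases le_or_gt K 0 with hK | hK
    · nlinarith [norm_nonneg (1 - μ)]
    · nlinarith [norm_nonneg (1 - μ)]
  nlinarith

namespace Matrix

section LinftyOpNorm

attribute [local instance] Matrix.linftyOpNormedAddCommGroup Matrix.linftyOpNormedSpace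
  Matrix.linftyOpNormedRing Matrix.linftyOpNormedAlgebra

variable {m k 𝕜 : Type*} [Fintype m] [DecidableEq m] [Fintype k] [DecidableEq k] [RCLike 𝕜]

theorem norm_mul_resolvent_mul_sub_one_le {A : Matrix m m 𝕜} {B : Matrix m k 𝕜}
    {J : Matrix k m 𝕜} (hJ : J * resolvent A (1 : 𝕜) * B = 1) {μ : 𝕜}
    (hμ : μ ∈ resolventSet 𝕜 A) (h1 : (1 : 𝕜) ∈ resolventSet 𝕜 A) :
    ‖J * resolvent A μ * B - 1‖ ≤
      ‖J‖ * ‖resolvent A μ‖ * ‖resolvent A (1 : 𝕜)‖ * ‖B‖ * ‖1 - μ‖ := by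
  have hdiff : J * resolvent A μ * B - 1 =
      (1 - μ) • (J * (resolvent A μ * resolvent A (1 : 𝕜)) * B) := by
    rw [← hJ, ← Matrix.sub_mul, ← Matrix.mul_sub, spectrum.resolvent_sub_resolvent_eq_smul hμ h1,
      Matrix.mul_smul, Matrix.smul_mul]
  calc ‖J * resolvent A μ * B - 1‖
      ≤ ‖1 - μ‖ * (‖J‖ * (‖resolvent A μ‖ * ‖resolvent A (1 : 𝕜)‖) * ‖B‖) := by
        rw [hdiff, norm_smul]
        gcongr
        refine (linfty_opNorm_mul _ _).trans ?_
        gcongr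
        refine (linfty_opNorm_mul _ _).trans ?_
        gcongr
        exact linfty_opNorm_mul _ _
    _ = _ := by ring

theorem norm_le_of_mem_spectrum_sub_smul {n : Type*} [Fintype n] [DecidableEq n]
    {M E : Matrix n n 𝕜} {ε : ℝ} {μ : 𝕜} (hε : 0 ≤ ε) (hε1 : ε ≤ 1)
    (hμ : μ ∈ spectrum 𝕜 (M - ε • E)) : ‖μ‖ ≤ (‖M‖ + ‖E‖) * ‖(1 : Matrix n n 𝕜)‖ := by
  refine (spectrum.norm_le_norm_mul_of_mem hμ).trans
    (mul_le_mul_of_nonneg_right ?_ (norm_nonneg _))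
  refine (norm_sub_le _ _).trans ?_
  rw [norm_smul, Real.norm_of_nonneg hε]
  gcongr
  exact mul_le_of_le_one_left (norm_nonneg _) hε1

theorem norm_sub_one_sub_le_of_mem_spectrum_fromBlocks {A : Matrix m m 𝕜} {B : Matrix m k 𝕜}
    {J : Matrix k m 𝕜} {ε : ℝ} {μ : 𝕜} (hε : 0 ≤ ε)
    (hμ : μ ∈ spectrum 𝕜 (fromBlocks A B (-(ε • J)) 1)) (hμA : μ ∈ resolventSet 𝕜 A) :
    ‖μ - (1 - ε : ℝ)‖ ≤ ε * ‖J * resolvent A μ * B - 1‖ * ‖(1 : Matrix k k 𝕜)‖ := by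
  refine (spectrum.norm_sub_le_of_mem (mem_spectrum_schur_complement hμ hμA) _).trans_eq ?_
  rw [Algebra.algebraMap_eq_smul_one, RCLike.ofReal_sub, sub_smul, RCLike.ofReal_one, one_smul,
    ← RCLike.real_smul_eq_coe_smul, ← norm_smul_of_nonneg hε, ← norm_neg]
  congr 2
  simp only [Matrix.neg_mul, Matrix.smul_mul]
  module

theorem IsSchurStable.eventually_fromBlocks_isSchurStable {A : Matrix m m 𝕜}
    {B : Matrix m k 𝕜} {J : Matrix k m 𝕜} (hA : A.IsSchurStable)
    (hJ : J * resolvent A (1 : 𝕜) * B = 1) :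
    ∀ᶠ ε : ℝ in 𝓝[>] 0, (fromBlocks A B (-(ε • J)) 1).IsSchurStable := by
  set M₀ : Matrix (m ⊕ k) (m ⊕ k) 𝕜 := fromBlocks A B 0 1
  set E : Matrix (m ⊕ k) (m ⊕ k) 𝕜 := fromBlocks 0 0 J 0
  set r := (‖M₀‖ + ‖E‖) * ‖(1 : Matrix (m ⊕ k) (m ⊕ k) 𝕜)‖
  -- for `ε ≤ 1`, every eigenvalue of the closed-loop matrix outside the unit disc lies in `S`
  set S := Metric.closedBall (0 : 𝕜) r \ Metric.ball 0 1
  obtain ⟨R, hR⟩ := spectrum.exists_norm_resolvent_le_of_isCompact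
    ((isCompact_closedBall (0 : 𝕜) r).diff Metric.isOpen_ball)
    fun z (hz : z ∈ S) ↦ hA.mem_resolventSet (by simpa using hz.2)
  set K := ‖J‖ * R * ‖resolvent A (1 : 𝕜)‖ * ‖B‖ * ‖(1 : Matrix k k 𝕜)‖
  refine (nhdsGT_basis 0).eventually_iff.mpr ⟨1 / (2 * (|K| + 1)), by positivity, ?_⟩
  rintro ε ⟨hε, hεK⟩ μ hμ
  rw [lt_div_iff₀ (by positivity)] at hεK
  by_contra! hμ1
  have hμS : μ ∈ S := by
    have hblock : fromBlocks A B (-(ε • J)) 1 = M₀ - ε • E := by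
      simp only [M₀, E, fromBlocks_smul, smul_zero, sub_eq_add_neg, fromBlocks_neg,
        fromBlocks_add, neg_zero, add_zero, zero_add]
    refine ⟨mem_closedBall_zero_iff.mpr (norm_le_of_mem_spectrum_sub_smul hε.le
      (by nlinarith [abs_nonneg K]) (hblock ▸ hμ)), by simpa using hμ1⟩
  have hμA := hA.mem_resolventSet hμ1
  have hnear : ‖μ - (1 - ε : ℝ)‖ ≤ ε * K * ‖1 - μ‖ := by
    calc ‖μ - (1 - ε : ℝ)‖
        ≤ ε * ‖J * resolvent A μ * B - 1‖ * ‖(1 : Matrix k k 𝕜)‖ :=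
          norm_sub_one_sub_le_of_mem_spectrum_fromBlocks hε.le hμ hμA
      _ ≤ ε * (‖J‖ * R * ‖resolvent A (1 : 𝕜)‖ * ‖B‖ * ‖1 - μ‖) * ‖(1 : Matrix k k 𝕜)‖ := by
          gcongr
          refine (norm_mul_resolvent_mul_sub_one_le hJ hμA
            (hA.mem_resolventSet (by simp))).trans ?_
          gcongr
          exact hR μ hμS
      _ = ε * K * ‖1 - μ‖ := by ring
  exact (RCLike.norm_lt_one_of_norm_sub_le hε (by nlinarith [abs_nonneg K])
    (by nlinarith [le_abs_self K]) hnear).not_ge hμ1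

end LinftyOpNorm

end Matrix

theorem low_gain_estimator_schur_stable_general
    {n q p : ℕ} (A : Matrix (Fin n) (Fin n) ℝ)
    (Bd : Matrix (Fin n) (Fin q) ℝ) (C : Matrix (Fin p) (Fin n) ℝ)
    (hSchur : ∀ μ ∈ spectrum ℂ (A.map (Complex.ofReal ·)), ‖μ‖ < 1)
    (G : Matrix (Fin p) (Fin q) ℝ)
    (hG : G = C * ((1 : Matrix (Fin n) (Fin n) ℝ) - A)⁻¹ * Bd)
    (hrank : G.rank = q)
    (L : Matrix (Fin q) (Fin p) ℝ)
    (hL : L = (G.transpose * G)⁻¹ * G.transpose) :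
    ∃ εstar > (0 : ℝ), ∀ ε ∈ Set.Ioo (0 : ℝ) εstar,
      ∀ μ ∈ spectrum ℂ
        ((Matrix.fromBlocks A Bd 0 (1 : Matrix (Fin q) (Fin q) ℝ) -
          Matrix.fromRows (0 : Matrix (Fin n) (Fin p) ℝ) (ε • L) *
            Matrix.fromCols C (0 : Matrix (Fin p) (Fin q) ℝ)).map (Complex.ofReal ·)),
        ‖μ‖ < 1 := by
  set f := Complex.ofRealHom
  have hLG : L * G = 1 := hL ▸
    inv_transpose_mul_self_mul_transpose_mul_self (hrank.trans (Fintype.card_fin q).symm)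
  have h1A : IsUnit (1 - A) := by
    refine isUnit_of_isUnit_map f ?_
    simpa [f, spectrum.mem_resolventSet_iff, Matrix.map_sub, Matrix.map_one] using
      IsSchurStable.mem_resolventSet (M := A.map f) hSchur norm_one.ge
  have hdc : (L * C).map f * resolvent (A.map f) (1 : ℂ) * Bd.map f = 1 := by
    have hreal : L * C * (1 - A)⁻¹ * Bd = 1 := by
      rw [← hLG, hG]
      simp only [Matrix.mul_assoc]
    rw [resolvent_map_one f h1A, ← Matrix.map_mul, ← Matrix.map_mul, hreal,
      Matrix.map_one _ f.map_zero f.map_one]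
  obtain ⟨εstar, hεstar, hstable⟩ := (nhdsGT_basis 0).eventually_iff.mp
    (IsSchurStable.eventually_fromBlocks_isSchurStable hSchur hdc)
  refine ⟨εstar, hεstar, fun ε hε ↦ ?_⟩
  rw [fromBlocks_sub_fromRows_zero_mul_fromCols_zero, fromBlocks_map,
    Matrix.map_neg _ Complex.ofReal_neg, Matrix.smul_mul, Matrix.map_smul _ _ fun _ ↦ by simp,
    Matrix.map_one _ Complex.ofReal_zero Complex.ofReal_one]
  exact hstable hε

/-- Low-gain disturbance estimator design: if `A` is Schur stable, the DC gain
`G_d(1) = C (I - A)⁻¹ B_d` has full column rank, and `L = G_d(1)†`, then there exists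
`ε* > 0` such that for all `ε ∈ (0, ε*)` the error matrix `𝒜 - ℒ𝒞` is Schur stable,
where `𝒜 = [[A, B_d],[0, I]]`, `𝒞 = [C, 0]`, `ℒ = [[0],[εL]]`. -/
theorem low_gain_estimator_schur_stable
    {n q p : ℕ} (A : Matrix (Fin n) (Fin n) ℝ)
    (Bd : Matrix (Fin n) (Fin q) ℝ) (C : Matrix (Fin p) (Fin n) ℝ)
    (hq : q ≤ p)
    (hSchur : ∀ μ ∈ spectrum ℂ (A.map (Complex.ofReal ·)), ‖μ‖ < 1)
    (G : Matrix (Fin p) (Fin q) ℝ)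
    (hG : G = C * ((1 : Matrix (Fin n) (Fin n) ℝ) - A)⁻¹ * Bd)
    (hrank : G.rank = q)
    (L : Matrix (Fin q) (Fin p) ℝ)
    (hL : L = (G.transpose * G)⁻¹ * G.transpose) :
    ∃ εstar > (0 : ℝ), ∀ ε ∈ Set.Ioo (0 : ℝ) εstar,
      ∀ μ ∈ spectrum ℂ
        ((Matrix.fromBlocks A Bd 0 (1 : Matrix (Fin q) (Fin q) ℝ) -
          Matrix.fromRows (0 : Matrix (Fin n) (Fin p) ℝ) (ε • L) *
            Matrix.fromCols C (0 : Matrix (Fin p) (Fin q) ℝ)).map (Complex.ofReal ·)),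
        ‖μ‖ < 1 :=
  low_gain_estimator_schur_stable_general A Bd C hSchur G hG hrank L hL
end

section
/- Fundamental Lemma (one direction): if (u_d, d_d, y_d) is a length-T trajectory of a controllable LTI system of order n, and col(u_d, d_d) is persistently exciting of order N + n, then the map g ↦ (H_N(u_d) g, H_N(d_d) g, H_N(y_d) g) is surjective onto the set of all length-N trajectories of the system; i.e., every length-N trajectory (u, d, y) satisfies col(H_N(u_d), H_N(d_d), H_N(y_d)) g = col(u, d, y) for some g. -/
/-- The Hankel matrix of depth `L` with `cols` columns built from the signal `z`. -/
def Hankel {ι : Type*} (z : ℕ → ι → ℝ) (L cols : ℕ) :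
    Matrix (Fin L × ι) (Fin cols) ℝ :=
  fun ir j => z (ir.1 + j) ir.2

/-- `(u, d, y)` is a length-`N` trajectory of the LTI system
`x(t+1) = A x(t) + B u(t) + B_d d(t)`, `y(t) = C x(t) + D u(t)`. -/
def IsTraj {n m q p : ℕ} (A : Matrix (Fin n) (Fin n) ℝ) (B : Matrix (Fin n) (Fin m) ℝ)
    (Bd : Matrix (Fin n) (Fin q) ℝ) (C : Matrix (Fin p) (Fin n) ℝ)
    (D : Matrix (Fin p) (Fin m) ℝ) (N : ℕ)
    (u : ℕ → Fin m → ℝ) (d : ℕ → Fin q → ℝ) (y : ℕ → Fin p → ℝ) : Prop :=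
  ∃ x : ℕ → Fin n → ℝ,
    (∀ t, t + 1 < N → x (t + 1) = A.mulVec (x t) + B.mulVec (u t) + Bd.mulVec (d t)) ∧
    (∀ t, t < N → y t = C.mulVec (x t) + D.mulVec (u t))

/-!
Writing `w = col(u, d)`, it suffices that the data states stacked over the input windows,
`[x_d(0) ⋯ x_d(T-N); H_N(w_d)]`, have full row rank: a combination `g` of the columns then
reproduces the initial state and inputs of any trajectory, and by linearity and shift invariance
`H_N(y_d) g` is its output. For a left-kernel vector `(ξ, η)`, propagate the annihilation
`k = 0, …, n` steps along the state recursion and combine the results with the coefficients of the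
characteristic polynomial of `A`: by Cayley–Hamilton the state drops out, leaving a left-kernel
vector of `H_{N+n}(w_d)`, which is zero by persistency of excitation. This says that the sequence
`ξ A^{n-1} B, …, ξ B, η_0, …, η_{N-1}, 0, 0, …` satisfies a backward linear recurrence with monic
leading coefficient, so it vanishes, and controllability turns `ξ A^k B = 0` (`k < n`) into `ξ = 0`.
-/

open Matrix Finset

namespace Matrix

variable {K : Type*} [Field K] {ι κ : Type*} [Fintype ι] [Fintype κ]

theorem rank_eq_card_iff_vecMul_injective (M : Matrix ι κ K) :
    M.rank = Fintype.card ι ↔ Function.Injective M.vecMul := by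
  rw [vecMul_injective_iff, linearIndependent_iff_card_eq_finrank_span, rank_eq_finrank_span_row,
    Set.finrank, eq_comm]

theorem mulVec_surjective_of_rank_eq_card {M : Matrix ι κ K}
    (h : M.rank = Fintype.card ι) : Function.Surjective M.mulVec :=
  LinearMap.range_eq_top.mp <| Submodule.eq_top_of_finrank_eq (S := LinearMap.range M.mulVecLin) <|
    h.trans (Module.finrank_fintype_fun_eq_card K).symm

variable {R : Type*} [CommRing R] [Nontrivial R] {n : ℕ} (A : Matrix (Fin n) (Fin n) R)

theorem sum_charpoly_coeff_smul_pow_eq_zero :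
    ∑ k ∈ range (n + 1), A.charpoly.coeff k • A ^ k = 0 := by
  simpa [Polynomial.aeval_eq_sum_range] using A.aeval_self_charpoly

theorem charpoly_coeff_dim_eq_one : A.charpoly.coeff n = 1 := by
  simpa using A.charpoly_monic.coeff_natDegree

end Matrix

theorem eq_zero_of_backward_recurrence {R V : Type*} [Semiring R] [AddCommMonoid V] [Module R V]
    {α : ℕ → R} {s : ℕ → V} {n M : ℕ} (hα : α n = 1) (hs : ∀ i, M ≤ i → s i = 0)
    (hrec : ∀ i < M, ∑ k ∈ range (n + 1), α k • s (i + n - k) = 0) (i : ℕ) : s i = 0 := by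
  suffices ∀ e i, M ≤ i + e → s i = 0 from this M i (by omega)
  intro e
  induction e with
  | zero => exact fun i hi => hs i hi
  | succ e ih =>
    intro i hi
    by_cases hiM : M ≤ i
    · exact hs i hiM
    have hlater : ∑ k ∈ range n, α k • s (i + n - k) = 0 :=
      sum_eq_zero fun k hk => by rw [ih _ (by simp at hk; omega), smul_zero]
    simpa [sum_range_succ, hlater, hα] using hrec i (by omega)

section Trajectories

variable {R : Type*} [CommRing R] {σ μ δ π : Type*} [Fintype σ] [Fintype μ] [Fintype δ]
  (A : Matrix σ σ R) (B : Matrix σ μ R) (Bd : Matrix σ δ R) (C : Matrix π σ R)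
  (D : Matrix π μ R)

def IsTrajWithState (N : ℕ) (x : ℕ → σ → R) (u : ℕ → μ → R) (d : ℕ → δ → R)
    (y : ℕ → π → R) : Prop :=
  (∀ t, t + 1 < N → x (t + 1) = A *ᵥ x t + B *ᵥ u t + Bd *ᵥ d t) ∧
    (∀ t, t < N → y t = C *ᵥ x t + D *ᵥ u t)

def windowSum {V : Type*} [AddCommMonoid V] [Module R V] {c : ℕ} (z : ℕ → V) (g : Fin c → R)
    (t : ℕ) : V :=
  ∑ j, g j • z (t + j)

variable {A B Bd C D}

theorem IsTrajWithState.windowSum {T N : ℕ} {x : ℕ → σ → R} {u : ℕ → μ → R} {d : ℕ → δ → R}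
    {y : ℕ → π → R} (h : IsTrajWithState A B Bd C D T x u d y) (hNT : N ≤ T)
    (g : Fin (T - N + 1) → R) :
    IsTrajWithState A B Bd C D N (windowSum x g) (windowSum u g) (windowSum d g)
      (windowSum y g) := by
  constructor
  · intro t ht
    simp only [_root_.windowSum, mulVec_sum, mulVec_smul, ← sum_add_distrib, ← smul_add]
    refine sum_congr rfl fun j _ => ?_
    rw [← h.1 (t + j) (by omega), add_right_comm]
  · intro t ht
    simp only [_root_.windowSum, mulVec_sum, mulVec_smul, ← sum_add_distrib, ← smul_add]
    exact sum_congr rfl fun j _ => by rw [h.2 (t + j) (by omega)]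

theorem IsTrajWithState.output_eq {N : ℕ} {x x' : ℕ → σ → R} {u u' : ℕ → μ → R}
    {d d' : ℕ → δ → R} {y y' : ℕ → π → R} (h : IsTrajWithState A B Bd C D N x u d y)
    (h' : IsTrajWithState A B Bd C D N x' u' d' y') (hx : x 0 = x' 0)
    (hu : ∀ t < N, u t = u' t) (hd : ∀ t < N, d t = d' t) : ∀ t < N, y t = y' t := by
  have hstate : ∀ t < N, x t = x' t := by
    intro t
    induction t with
    | zero => exact fun _ => hx
    | succ t ih =>
      intro ht
      rw [h.1 t ht, h'.1 t ht, ih (by omega), hu t (by omega), hd t (by omega)]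
  intro t ht
  rw [h.2 t ht, h'.2 t ht, hstate t ht, hu t ht]

end Trajectories

section Hankel

variable {ι : Type*} {L c : ℕ}

theorem hankel_mulVec (z : ℕ → ι → ℝ) (g : Fin c → ℝ) :
    Hankel z L c *ᵥ g = fun lr => windowSum z g lr.1 lr.2 := by
  ext ⟨l, i⟩
  simp [Hankel, mulVec, dotProduct, windowSum, Finset.sum_apply, mul_comm]

theorem vecMul_hankel [Fintype ι] (γ : ℕ → ι → ℝ) (w : ℕ → ι → ℝ) :
    (fun lr : Fin L × ι => γ lr.1 lr.2) ᵥ* Hankel w L c =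
      fun j : Fin c => ∑ i ∈ range L, γ i ⬝ᵥ w (j + i) := by
  ext j
  simp only [vecMul, dotProduct, Fintype.sum_prod_type, Hankel]
  rw [Fin.sum_univ_eq_sum_range (fun i => ∑ r, γ i r * w (i + j) r)]
  simp_rw [add_comm]

end Hankel

theorem eq_zero_of_hankel_rank_eq_card {ι : Type*} [Fintype ι] {w : ℕ → ι → ℝ} {L T : ℕ}
    (hLT : L ≤ T) (hPE : (Hankel w L (T - L + 1)).rank = Fintype.card (Fin L × ι))
    (γ : ℕ → ι → ℝ) (h : ∀ j, j + L ≤ T → ∑ i ∈ range L, γ i ⬝ᵥ w (j + i) = 0) :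
    ∀ i < L, γ i = 0 := by
  have hker : (fun lr : Fin L × ι => γ lr.1 lr.2) = 0 := by
    refine (rank_eq_card_iff_vecMul_injective _).1 hPE ?_
    simp only [vecMul_hankel, zero_vecMul]
    exact funext fun j => h j (by omega)
  exact fun i hi => funext fun r => congrFun hker (⟨i, hi⟩, r)

theorem eq_zero_of_controllable {K : Type*} [Field K] {ι : Type*} [Fintype ι] {n : ℕ}
    {A : Matrix (Fin n) (Fin n) K} {B : Matrix (Fin n) ι K}
    (hctrb : (of fun (i : Fin n) (kr : Fin n × ι) => (A ^ (kr.1 : ℕ) * B) i kr.2).rank = n)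
    (ξ : Fin n → K) (h : ∀ k < n, ξ ᵥ* (A ^ k * B) = 0) : ξ = 0 := by
  refine (rank_eq_card_iff_vecMul_injective _).1 (by simpa using hctrb) ?_
  ext ⟨k, r⟩
  simpa [vecMul, dotProduct] using congrFun (h k k.isLt) r

section Annihilator

variable {R : Type*} [CommRing R] {ι : Type*} {n : ℕ}
  (A : Matrix (Fin n) (Fin n) R) (B : Matrix (Fin n) ι R)

/-- The coefficients of `w 0, w 1, …` in `ξ ⬝ᵥ x n + ∑ l, η l ⬝ᵥ w (n + l)` once the state is
eliminated through `x n = A ^ n *ᵥ x 0 + ∑ i < n, (A ^ (n - 1 - i) * B) *ᵥ w i`. -/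
def inputCoeffs (ξ : Fin n → R) (η : ℕ → ι → R) (i : ℕ) : ι → R :=
  if i < n then ξ ᵥ* (A ^ (n - 1 - i) * B) else η (i - n)

variable {A B} {ξ : Fin n → R} {η : ℕ → ι → R} {x : ℕ → Fin n → R} {w : ℕ → ι → R} {N T : ℕ}

theorem inputCoeffs_eq_zero (hη : ∀ l, N ≤ l → η l = 0) {i : ℕ} (hi : N + n ≤ i) :
    inputCoeffs A B ξ η i = 0 := by
  rw [inputCoeffs, if_neg (by omega), hη _ (by omega)]

variable [Fintype ι]

theorem dotProduct_add_sum_inputCoeffs_eq_zero (hN : 0 < N)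
    (hx : ∀ t, t + 1 < T → x (t + 1) = A *ᵥ x t + B *ᵥ w t)
    (h : ∀ j, j + N ≤ T → ξ ⬝ᵥ x j + ∑ l ∈ range N, η l ⬝ᵥ w (j + l) = 0) :
    ∀ k ≤ n, ∀ j, j + N + k ≤ T →
      (ξ ᵥ* A ^ k) ⬝ᵥ x j + ∑ i ∈ range (N + k), inputCoeffs A B ξ η (i + n - k) ⬝ᵥ w (j + i)
        = 0 := by
  intro k
  induction k with
  | zero =>
    intro _ j hj
    simpa [inputCoeffs] using h j hj
  | succ k ih =>
    intro hk j hj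
    have hnext := ih (by omega) (j + 1) (by omega)
    rw [hx j (by omega), dotProduct_add, dotProduct_mulVec, dotProduct_mulVec,
      vecMul_vecMul, vecMul_vecMul, ← pow_succ] at hnext
    have hfirst : inputCoeffs A B ξ η (0 + n - (k + 1)) = ξ ᵥ* (A ^ k * B) := by
      rw [inputCoeffs, if_pos (by omega), show n - 1 - (0 + n - (k + 1)) = k by omega]
    rw [← add_assoc, sum_range_succ', hfirst, add_zero]
    have hshift : ∀ i ∈ range (N + k),
        inputCoeffs A B ξ η (i + 1 + n - (k + 1)) ⬝ᵥ w (j + (i + 1))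
          = inputCoeffs A B ξ η (i + n - k) ⬝ᵥ w (j + 1 + i) := fun i _ => by
      rw [show i + 1 + n - (k + 1) = i + n - k by omega, add_comm i 1, add_assoc]
    rw [sum_congr rfl hshift]
    linear_combination hnext

theorem eq_zero_of_annihilates_state_window [Nontrivial R] (hN : 0 < N)
    (hx : ∀ t, t + 1 < T → x (t + 1) = A *ᵥ x t + B *ᵥ w t)
    (hctrb : ∀ ξ : Fin n → R, (∀ k < n, ξ ᵥ* (A ^ k * B) = 0) → ξ = 0)
    (hPE : ∀ γ : ℕ → ι → R,
      (∀ j, j + (N + n) ≤ T → ∑ i ∈ range (N + n), γ i ⬝ᵥ w (j + i) = 0) → ∀ i < N + n, γ i = 0)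
    (hη : ∀ l, N ≤ l → η l = 0)
    (h : ∀ j, j + N ≤ T → ξ ⬝ᵥ x j + ∑ l ∈ range N, η l ⬝ᵥ w (j + l) = 0) :
    ξ = 0 ∧ η = 0 := by
  have hshift := dotProduct_add_sum_inputCoeffs_eq_zero hN hx h
  set s := inputCoeffs A B ξ η with hs_def
  have hcomb : ∀ j, j + (N + n) ≤ T →
      ∑ i ∈ range (N + n), (∑ k ∈ range (n + 1), A.charpoly.coeff k • s (i + n - k)) ⬝ᵥ w (j + i)
        = 0 := by
    intro j hj
    have hsum : ∀ k ∈ range (n + 1),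
        ∑ i ∈ range (N + n), s (i + n - k) ⬝ᵥ w (j + i) = -((ξ ᵥ* A ^ k) ⬝ᵥ x j) := by
      intro k hk
      rw [mem_range] at hk
      rw [← sum_subset (range_subset_range.2 (by omega : N + k ≤ N + n)) fun i _ hi => by
        rw [hs_def, inputCoeffs_eq_zero hη (by simp at hi; omega), zero_dotProduct]]
      exact eq_neg_of_add_eq_zero_right (hshift k (by omega) j (by omega))
    calc _ = ∑ k ∈ range (n + 1),
              A.charpoly.coeff k * ∑ i ∈ range (N + n), s (i + n - k) ⬝ᵥ w (j + i) := by
          simp only [sum_dotProduct, smul_dotProduct, smul_eq_mul, mul_sum]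
          exact sum_comm
      _ = -((ξ ᵥ* ∑ k ∈ range (n + 1), A.charpoly.coeff k • A ^ k) ⬝ᵥ x j) := by
          rw [sum_congr rfl fun k hk => by rw [hsum k hk]]
          simp [Matrix.vecMul_sum, sum_dotProduct, vecMul_smul]
      _ = 0 := by
          rw [sum_charpoly_coeff_smul_pow_eq_zero, vecMul_zero, zero_dotProduct, neg_zero]
  have hs : ∀ i, s i = 0 := eq_zero_of_backward_recurrence (charpoly_coeff_dim_eq_one A)
    (fun i hi => inputCoeffs_eq_zero hη hi) (hPE _ hcomb)
  refine ⟨hctrb ξ fun k hk => ?_, funext fun l => ?_⟩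
  · simpa [hs_def, inputCoeffs, show n - 1 - k < n by omega, show n - 1 - (n - 1 - k) = k by omega]
      using hs (n - 1 - k)
  · simpa [hs_def, inputCoeffs] using hs (l + n)

end Annihilator

theorem exists_windowSum_eq {ι : Type*} [Fintype ι] {n N T : ℕ} {A : Matrix (Fin n) (Fin n) ℝ}
    {B : Matrix (Fin n) ι ℝ} {x : ℕ → Fin n → ℝ} {w : ℕ → ι → ℝ} (hN : 0 < N) (hNT : N ≤ T)
    (hx : ∀ t, t + 1 < T → x (t + 1) = A *ᵥ x t + B *ᵥ w t)
    (hctrb : (of fun (i : Fin n) (kr : Fin n × ι) => (A ^ (kr.1 : ℕ) * B) i kr.2).rank = n)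
    (hPE : (Hankel w (N + n) (T - (N + n) + 1)).rank = Fintype.card (Fin (N + n) × ι))
    (x₀ : Fin n → ℝ) (v : ℕ → ι → ℝ) :
    ∃ g : Fin (T - N + 1) → ℝ, windowSum x g 0 = x₀ ∧ ∀ t < N, windowSum w g t = v t := by
  have hT : N + n ≤ T := by
    have hc := hctrb ▸ rank_le_card_width _
    have hh := hPE ▸ rank_le_card_width _
    simp only [Fintype.card_prod, Fintype.card_fin] at hc hh
    rcases Nat.eq_zero_or_pos (Fintype.card ι) with hι | hι
    · rw [hι, mul_zero, Nat.le_zero] at hc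
      omega
    · have := Nat.le_mul_of_pos_right (N + n) hι
      omega
  set Θ := fromRows (of fun i (j : Fin (T - N + 1)) => x j i) (Hankel w N (T - N + 1)) with hΘ
  have hinj : Function.Injective Θ.vecMul := by
    rw [← coe_vecMulLinear, ← LinearMap.ker_eq_bot, LinearMap.ker_eq_bot']
    intro ζ hζ
    set η : ℕ → ι → ℝ := fun l r => if h : l < N then ζ (.inr (⟨l, h⟩, r)) else 0
    have hζη : ζ ∘ Sum.inr = fun lr : Fin N × ι => η lr.1 lr.2 :=
      funext fun lr => by simp [η, lr.1.isLt]
    have hannihilates : ∀ j, j + N ≤ T →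
        (ζ ∘ Sum.inl) ⬝ᵥ x j + ∑ l ∈ range N, η l ⬝ᵥ w (j + l) = 0 := fun j hj => by
      have := congrFun hζ ⟨j, by omega⟩
      simp only [coe_vecMulLinear, hΘ, vecMul_fromRows, hζη, vecMul_hankel] at this
      simpa [vecMul, dotProduct] using this
    obtain ⟨hξ, hη⟩ := eq_zero_of_annihilates_state_window hN hx (eq_zero_of_controllable hctrb)
      (eq_zero_of_hankel_rank_eq_card hT hPE)
      (fun l hl => funext fun r => by simp [η, not_lt.2 hl]) hannihilates
    ext (i | ⟨l, r⟩)
    · exact congrFun hξ i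
    · simpa [η] using congrFun (congrFun hη l) r
  obtain ⟨g, hg⟩ := mulVec_surjective_of_rank_eq_card
    ((rank_eq_card_iff_vecMul_injective Θ).2 hinj) (Sum.elim x₀ fun lr => v lr.1 lr.2)
  refine ⟨g, funext fun i => ?_, fun t ht => funext fun r => ?_⟩
  · simpa [Θ, windowSum, mulVec, dotProduct, mul_comm] using congrFun hg (.inl i)
  · simpa [Θ, hankel_mulVec] using congrFun hg (.inr (⟨t, ht⟩, r))

/-- Fundamental Lemma (one direction): if `(u_d, d_d, y_d)` is a length-`T` trajectory of a
controllable LTI system of order `n` and `col(u_d, d_d)` is persistently exciting of order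
`N + n`, then every length-`N` trajectory is a linear combination of the columns of the
stacked Hankel matrices of the data. -/
theorem fundamental_lemma
    {n m q p : ℕ} (A : Matrix (Fin n) (Fin n) ℝ) (B : Matrix (Fin n) (Fin m) ℝ)
    (Bd : Matrix (Fin n) (Fin q) ℝ) (C : Matrix (Fin p) (Fin n) ℝ)
    (D : Matrix (Fin p) (Fin m) ℝ)
    (T N : ℕ) (hNT : N ≤ T)
    (ud : ℕ → Fin m → ℝ) (dd : ℕ → Fin q → ℝ) (yd : ℕ → Fin p → ℝ)
    (hdata : IsTraj A B Bd C D T ud dd yd)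
    (hctrb : (Matrix.of (fun (i : Fin n) (kj : Fin n × (Fin m ⊕ Fin q)) =>
        (A ^ (kj.1 : ℕ) * Matrix.fromCols B Bd) i kj.2)).rank = n)
    (hPE : (Hankel (fun t => Sum.elim (ud t) (dd t)) (N + n) (T - (N + n) + 1)).rank
        = Fintype.card (Fin (N + n) × (Fin m ⊕ Fin q))) :
    ∀ (u : ℕ → Fin m → ℝ) (d : ℕ → Fin q → ℝ) (y : ℕ → Fin p → ℝ),
      IsTraj A B Bd C D N u d y →
      ∃ g : Fin (T - N + 1) → ℝ,
        ((Hankel ud N (T - N + 1)).mulVec g = fun ir => u ir.1 ir.2) ∧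
        ((Hankel dd N (T - N + 1)).mulVec g = fun ir => d ir.1 ir.2) ∧
        ((Hankel yd N (T - N + 1)).mulVec g = fun ir => y ir.1 ir.2) := by
  rintro u d y ⟨x, hx⟩
  obtain ⟨xd, hxd⟩ := hdata
  rcases Nat.eq_zero_or_pos N with rfl | hN
  · exact ⟨0, Subsingleton.elim _ _, Subsingleton.elim _ _, Subsingleton.elim _ _⟩
  have hxw : ∀ t, t + 1 < T →
      xd (t + 1) = A *ᵥ xd t + fromCols B Bd *ᵥ Sum.elim (ud t) (dd t) := fun t ht => by
    rw [fromCols_mulVec_sumElim, ← add_assoc, hxd.1 t ht]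
  obtain ⟨g, hx₀, hw⟩ := exists_windowSum_eq hN hNT hxw hctrb hPE (x 0)
    fun t => Sum.elim (u t) (d t)
  have hu : ∀ t < N, windowSum ud g t = u t := fun t ht => funext fun r => by
    simpa [windowSum, Finset.sum_apply] using congrFun (hw t ht) (.inl r)
  have hd : ∀ t < N, windowSum dd g t = d t := fun t ht => funext fun r => by
    simpa [windowSum, Finset.sum_apply] using congrFun (hw t ht) (.inr r)
  have hy := (IsTrajWithState.windowSum hxd hNT g).output_eq hx hx₀ hu hd
  refine ⟨g, ?_, ?_, ?_⟩ <;> rw [hankel_mulVec] <;> ext ⟨t, i⟩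
  · rw [hu t t.isLt]
  · rw [hd t t.isLt]
  · rw [hy t t.isLt]
end

section
/- Converse direction of data-driven representation: for any vector g ∈ ℝ^{T−N+1}, the triple (H_N(u_d) g, H_N(d_d) g, H_N(y_d) g) is a valid length-N trajectory of the LTI system, provided (u_d, d_d, y_d) is itself a trajectory of the system. -/
lemma mulVec_sum_comb {a b c : ℕ} (M : Matrix (Fin a) (Fin b) ℝ)
    (v : ℕ → Fin b → ℝ) (g : Fin c → ℝ) (t : ℕ) :
    M.mulVec (fun i => ∑ j : Fin c, v (t + j) i * g j) =
      fun i => ∑ j : Fin c, M.mulVec (v (t + j)) i * g j := by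
  funext i
  simp only [Matrix.mulVec, dotProduct]
  simp only [Finset.mul_sum, Finset.sum_mul]
  rw [Finset.sum_comm]
  congr 1; funext j; congr 1; funext k; ring

/-- Converse direction of the data-driven representation: every linear combination of the
columns of the stacked Hankel matrices built from a trajectory is again a trajectory. -/
theorem hankel_columns_span_trajectories
    {n m q p : ℕ} (A : Matrix (Fin n) (Fin n) ℝ) (B : Matrix (Fin n) (Fin m) ℝ)
    (Bd : Matrix (Fin n) (Fin q) ℝ) (C : Matrix (Fin p) (Fin n) ℝ)
    (D : Matrix (Fin p) (Fin m) ℝ)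
    (T N : ℕ) (hNT : N ≤ T)
    (ud : ℕ → Fin m → ℝ) (dd : ℕ → Fin q → ℝ) (yd : ℕ → Fin p → ℝ)
    (hdata : IsTraj A B Bd C D T ud dd yd)
    (g : Fin (T - N + 1) → ℝ) :
    IsTraj A B Bd C D N
      (fun t i => ∑ j : Fin (T - N + 1), ud (t + j) i * g j)
      (fun t i => ∑ j : Fin (T - N + 1), dd (t + j) i * g j)
      (fun t i => ∑ j : Fin (T - N + 1), yd (t + j) i * g j) := by
  obtain ⟨x, hx, hy⟩ := hdata
  refine ⟨fun t i => ∑ j : Fin (T - N + 1), x (t + j) i * g j, ?_, ?_⟩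
  · intro t ht
    have key : ∀ j : Fin (T - N + 1),
        x (t + 1 + (j : ℕ)) = A.mulVec (x (t + j)) + B.mulVec (ud (t + j)) +
          Bd.mulVec (dd (t + j)) := by
      intro j
      have hj : (j : ℕ) ≤ T - N := Nat.lt_succ_iff.mp j.isLt
      have h1 : t + (j : ℕ) + 1 < T := by omega
      have := hx (t + j) h1
      rw [show t + 1 + (j : ℕ) = t + (j : ℕ) + 1 by ring, this]
    rw [mulVec_sum_comb, mulVec_sum_comb, mulVec_sum_comb]
    funext i
    simp only [Pi.add_apply, ← Finset.sum_add_distrib]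
    congr 1; funext j
    rw [key j]
    simp [Pi.add_apply]; ring
  · intro t ht
    have key : ∀ j : Fin (T - N + 1),
        yd (t + (j : ℕ)) = C.mulVec (x (t + j)) + D.mulVec (ud (t + j)) := by
      intro j
      have hj : (j : ℕ) ≤ T - N := Nat.lt_succ_iff.mp j.isLt
      exact hy (t + j) (by omega)
    rw [mulVec_sum_comb, mulVec_sum_comb]
    funext i
    simp only [Pi.add_apply, ← Finset.sum_add_distrib]
    congr 1; funext j
    rw [key j]
    simp [Pi.add_apply]; ring
end

section
/- Uniqueness of data-driven prediction: let T_ini ≥ ℓ, where ℓ is the lag of the system (the smallest integer such that O_ℓ = col(C, CA, …, CA^{ℓ−1}) has rank n). Then any two length-(T_ini + N) trajectories of the system that agree on the inputs and disturbances on the full horizon and agree on the outputs during the first T_ini steps must agree on the outputs during the last N steps. -/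
lemma rank_full_inj {α : Type*} [Fintype α] {n : ℕ} (M : Matrix α (Fin n) ℝ)
    (h : M.rank = n) (v : Fin n → ℝ) (hv : M.mulVec v = 0) : v = 0 := by
  have hrn := LinearMap.finrank_range_add_finrank_ker M.mulVecLin
  rw [show Module.finrank ℝ (LinearMap.range M.mulVecLin) = M.rank from rfl, h,
    Module.finrank_fintype_fun_eq_card, Fintype.card_fin] at hrn
  have hker : LinearMap.ker M.mulVecLin = ⊥ :=
    Submodule.finrank_eq_zero.mp (by omega)
  have hm : v ∈ LinearMap.ker M.mulVecLin := hv
  simpa [hker] using hm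

/-- Uniqueness of data-driven prediction: if `T_ini ≥ ℓ` where the observability matrix
`O_ℓ = col(C, CA, …, CA^{ℓ-1})` has rank `n`, then two length-`(T_ini + N)` trajectories
agreeing on inputs and disturbances on the whole horizon and on outputs during the first
`T_ini` steps agree on outputs during the last `N` steps. -/
theorem data_driven_prediction_unique
    {n m q p : ℕ} (A : Matrix (Fin n) (Fin n) ℝ) (B : Matrix (Fin n) (Fin m) ℝ)
    (Bd : Matrix (Fin n) (Fin q) ℝ) (C : Matrix (Fin p) (Fin n) ℝ)
    (D : Matrix (Fin p) (Fin m) ℝ)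
    (ℓ Tini N : ℕ) (hTini : ℓ ≤ Tini)
    (hlag : (Matrix.of (fun (ki : Fin ℓ × Fin p) (j : Fin n) =>
        (C * A ^ (ki.1 : ℕ)) ki.2 j)).rank = n)
    (u : ℕ → Fin m → ℝ) (d : ℕ → Fin q → ℝ) (y₁ y₂ : ℕ → Fin p → ℝ)
    (x₁ x₂ : ℕ → Fin n → ℝ)
    (hdyn₁ : ∀ t, t + 1 < Tini + N →
      x₁ (t + 1) = A.mulVec (x₁ t) + B.mulVec (u t) + Bd.mulVec (d t))
    (hout₁ : ∀ t, t < Tini + N → y₁ t = C.mulVec (x₁ t) + D.mulVec (u t))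
    (hdyn₂ : ∀ t, t + 1 < Tini + N →
      x₂ (t + 1) = A.mulVec (x₂ t) + B.mulVec (u t) + Bd.mulVec (d t))
    (hout₂ : ∀ t, t < Tini + N → y₂ t = C.mulVec (x₂ t) + D.mulVec (u t))
    (hpast : ∀ t, t < Tini → y₁ t = y₂ t) :
    ∀ t, t < Tini + N → y₁ t = y₂ t := by
  intro t ht
  set e : ℕ → Fin n → ℝ := fun s => x₁ s - x₂ s with he
  -- error dynamics
  have hstep : ∀ s, s + 1 < Tini + N → e (s + 1) = A.mulVec (e s) := by
    intro s hs
    simp only [he, hdyn₁ s hs, hdyn₂ s hs]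
    rw [Matrix.mulVec_sub]
    abel
  have hpow : ∀ s, s < Tini + N → e s = (A ^ s).mulVec (e 0) := by
    intro s hs
    induction s with
    | zero => simp
    | succ k ih =>
      rw [hstep k hs, ih (by omega), Matrix.mulVec_mulVec, ← pow_succ']
  -- output error
  have hCe : ∀ s, s < Tini + N → y₁ s - y₂ s = C.mulVec (e s) := by
    intro s hs
    rw [hout₁ s hs, hout₂ s hs]
    simp only [he, Matrix.mulVec_sub]
    abel
  -- past outputs agree, so O_ℓ annihilates e 0
  have hCA : ∀ k : ℕ, k < ℓ → (C * A ^ k).mulVec (e 0) = 0 := by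
    intro k hk
    have hk' : k < Tini + N := by omega
    have h0 : C.mulVec (e k) = 0 := by
      rw [← hCe k hk', hpast k (by omega)]; simp
    rw [hpow k hk'] at h0
    rwa [Matrix.mulVec_mulVec] at h0
  have hO : (Matrix.of (fun (ki : Fin ℓ × Fin p) (j : Fin n) =>
      (C * A ^ (ki.1 : ℕ)) ki.2 j)).mulVec (e 0) = 0 := by
    funext ki
    have := congrFun (hCA ki.1 ki.1.isLt) ki.2
    simpa [Matrix.mulVec, dotProduct] using this
  have he0 : e 0 = 0 := rank_full_inj _ hlag _ hO
  -- conclude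
  have : e t = 0 := by rw [hpow t ht, he0, Matrix.mulVec_zero]
  have hx : x₁ t = x₂ t := by
    have := sub_eq_zero.mp this
    exact this
  rw [hout₁ t ht, hout₂ t ht, hx]
end
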